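/- arXiv:2506.06863 — 2 statements merged into one kernel-verified Lean document; each statement's English description precedes it below -/
import Mathlib

section
/- Let a, d, Re ∈ ℝ with Re > 0, let u : ℝ³ × ℝ → ℝ³ be the Beltrami velocity field with components u₁ = −a e^{−d²t/Re} (e^{ax} sin(ay+dz) + e^{az} cos(ax+dy)), u₂ = −a e^{−d²t/Re} (e^{ay} sin(az+dx) + e^{ax} cos(ay+dz)), u₃ = −a e^{−d²t/Re} (e^{az} sin(ax+dy) + e^{ay} cos(az+dx)), and let p(x,y,z,t) = −(a²/2) e^{−2d²t/Re} [ e^{2ax} + e^{2ay} + e^{2az} + 2 sin(ax+dy) cos(az+dx) e^{a(y+z)} + 2 sin(ay+dz) cos(ax+dy) e^{a(z+x)} + 2 sin(az+dx) cos(ay+dz) e^{a(x+y)} ]. Then the pressure gradient cancels the convection term: for each component d' ∈ {1,2,3} and all (x,y,z,t), u₁ ∂u_{d'}/∂x + u₂ ∂u_{d'}/∂y + u₃ ∂u_{d'}/∂z = −∂p/∂x_{d'}. -/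
/-- First component of the Beltrami (Ethier–Steinman) velocity field. -/
noncomputable def belU1 (a d Re x y z t : ℝ) : ℝ :=
  -a * Real.exp (-(d ^ 2 * t) / Re) *
    (Real.exp (a * x) * Real.sin (a * y + d * z) +
     Real.exp (a * z) * Real.cos (a * x + d * y))

/-- Second component of the Beltrami (Ethier–Steinman) velocity field. -/
noncomputable def belU2 (a d Re x y z t : ℝ) : ℝ :=
  -a * Real.exp (-(d ^ 2 * t) / Re) *
    (Real.exp (a * y) * Real.sin (a * z + d * x) +
     Real.exp (a * x) * Real.cos (a * y + d * z))

/-- Third component of the Beltrami (Ethier–Steinman) velocity field. -/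
noncomputable def belU3 (a d Re x y z t : ℝ) : ℝ :=
  -a * Real.exp (-(d ^ 2 * t) / Re) *
    (Real.exp (a * z) * Real.sin (a * x + d * y) +
     Real.exp (a * y) * Real.cos (a * z + d * x))

/-- The Beltrami (Ethier–Steinman) pressure. -/
noncomputable def belP (a d Re x y z t : ℝ) : ℝ :=
  -(a ^ 2 / 2) * Real.exp (-(2 * d ^ 2 * t) / Re) *
    (Real.exp (2 * a * x) + Real.exp (2 * a * y) + Real.exp (2 * a * z) +
     2 * Real.sin (a * x + d * y) * Real.cos (a * z + d * x) * Real.exp (a * (y + z)) +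
     2 * Real.sin (a * y + d * z) * Real.cos (a * x + d * y) * Real.exp (a * (z + x)) +
     2 * Real.sin (a * z + d * x) * Real.cos (a * y + d * z) * Real.exp (a * (x + y)))

lemma hmulAux (c x : ℝ) : HasDerivAt (fun w : ℝ => c * w) c x := by
  simpa using (hasDerivAt_id x).const_mul c

lemma beltrami_key (a d Re x y z t : ℝ) :
    belU1 a d Re x y z t * deriv (fun x' => belU1 a d Re x' y z t) x +
      belU2 a d Re x y z t * deriv (fun y' => belU1 a d Re x y' z t) y +
      belU3 a d Re x y z t * deriv (fun z' => belU1 a d Re x y z' t) z =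
      -(deriv (fun x' => belP a d Re x' y z t) x) := by
  have h1x : HasDerivAt (fun x' : ℝ => -a * Real.exp (-(d ^ 2 * t) / Re) *
      (Real.exp (a * x') * Real.sin (a * y + d * z) +
       Real.exp (a * z) * Real.cos (a * x' + d * y))) _ x :=
    ((((hmulAux a x).exp.mul_const (Real.sin (a * y + d * z))).add
      ((((hmulAux a x).add_const (d * y)).cos).const_mul (Real.exp (a * z)))).const_mul
      (-a * Real.exp (-(d ^ 2 * t) / Re)))
  have h1y : HasDerivAt (fun y' : ℝ => -a * Real.exp (-(d ^ 2 * t) / Re) *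
      (Real.exp (a * x) * Real.sin (a * y' + d * z) +
       Real.exp (a * z) * Real.cos (a * x + d * y'))) _ y :=
    (((((hmulAux a y).add_const (d * z)).sin.const_mul (Real.exp (a * x))).add
      ((((hmulAux d y).const_add (a * x)).cos).const_mul (Real.exp (a * z)))).const_mul
      (-a * Real.exp (-(d ^ 2 * t) / Re)))
  have h1z : HasDerivAt (fun z' : ℝ => -a * Real.exp (-(d ^ 2 * t) / Re) *
      (Real.exp (a * x) * Real.sin (a * y + d * z') +
       Real.exp (a * z') * Real.cos (a * x + d * y))) _ z :=
    (((((hmulAux d z).const_add (a * y)).sin.const_mul (Real.exp (a * x))).add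
      ((hmulAux a z).exp.mul_const (Real.cos (a * x + d * y)))).const_mul
      (-a * Real.exp (-(d ^ 2 * t) / Re)))
  have hP : HasDerivAt (fun x' : ℝ => -(a ^ 2 / 2) * Real.exp (-(2 * d ^ 2 * t) / Re) *
      (Real.exp (2 * a * x') + Real.exp (2 * a * y) + Real.exp (2 * a * z) +
       2 * Real.sin (a * x' + d * y) * Real.cos (a * z + d * x') * Real.exp (a * (y + z)) +
       2 * Real.sin (a * y + d * z) * Real.cos (a * x' + d * y) * Real.exp (a * (z + x')) +
       2 * Real.sin (a * z + d * x') * Real.cos (a * y + d * z) * Real.exp (a * (x' + y)))) _ x :=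
    (((((((hmulAux (2 * a) x).exp.add_const (Real.exp (2 * a * y))).add_const
        (Real.exp (2 * a * z))).add
        (((((hmulAux a x).add_const (d * y)).sin.const_mul 2).mul
          (((hmulAux d x).const_add (a * z)).cos)).mul_const (Real.exp (a * (y + z))))).add
        ((((hmulAux a x).add_const (d * y)).cos.const_mul
          (2 * Real.sin (a * y + d * z))).mul
          ((((hasDerivAt_id x).const_add z).const_mul a).exp))).add
        (((((hmulAux d x).const_add (a * z)).sin.const_mul 2).mul_const
          (Real.cos (a * y + d * z))).mul
          ((((hasDerivAt_id x).add_const y).const_mul a).exp))).const_mul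
      (-(a ^ 2 / 2) * Real.exp (-(2 * d ^ 2 * t) / Re)))
  unfold belU1 belU2 belU3 belP
  rw [h1x.deriv, h1y.deriv, h1z.deriv, hP.deriv]
  simp only [id_eq]
  have hA : Real.exp (2 * a * x) = Real.exp (a * x) * Real.exp (a * x) := by
    rw [← Real.exp_add]; ring_nf
  have hB : Real.exp (2 * a * y) = Real.exp (a * y) * Real.exp (a * y) := by
    rw [← Real.exp_add]; ring_nf
  have hC : Real.exp (2 * a * z) = Real.exp (a * z) * Real.exp (a * z) := by
    rw [← Real.exp_add]; ring_nf
  have hD : Real.exp (a * (y + z)) = Real.exp (a * y) * Real.exp (a * z) := by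
    rw [← Real.exp_add]; ring_nf
  have hE : Real.exp (a * (z + x)) = Real.exp (a * z) * Real.exp (a * x) := by
    rw [← Real.exp_add]; ring_nf
  have hF : Real.exp (a * (x + y)) = Real.exp (a * x) * Real.exp (a * y) := by
    rw [← Real.exp_add]; ring_nf
  have hT : Real.exp (-(2 * d ^ 2 * t) / Re) =
      Real.exp (-(d ^ 2 * t) / Re) * Real.exp (-(d ^ 2 * t) / Re) := by
    rw [← Real.exp_add]; ring_nf
  rw [hA, hD, hE, hF, hT]
  linear_combination (a ^ 3 * Real.exp (-(d ^ 2 * t) / Re) * Real.exp (-(d ^ 2 * t) / Re) *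
    Real.exp (a * x) * Real.exp (a * x)) * Real.sin_sq_add_cos_sq (a * y + d * z)

lemma u2_eq (a d Re x y z t : ℝ) : belU2 a d Re x y z t = belU1 a d Re y z x t := by
  unfold belU1 belU2; ring

lemma u3_eq (a d Re x y z t : ℝ) : belU3 a d Re x y z t = belU1 a d Re z x y t := by
  unfold belU1 belU3; ring

lemma p_cyc (a d Re x y z t : ℝ) : belP a d Re x y z t = belP a d Re y z x t := by
  unfold belP; ring

/-- For the Beltrami flow, the pressure gradient cancels the convection term:
`u₁ ∂u_d'/∂x + u₂ ∂u_d'/∂y + u₃ ∂u_d'/∂z = −∂p/∂x_d'` for each `d' ∈ {1,2,3}`. -/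
theorem beltrami_convection_eq_neg_pressure_gradient (a d Re : ℝ) (hRe : 0 < Re)
    (x y z t : ℝ) :
    (belU1 a d Re x y z t * deriv (fun x' => belU1 a d Re x' y z t) x +
       belU2 a d Re x y z t * deriv (fun y' => belU1 a d Re x y' z t) y +
       belU3 a d Re x y z t * deriv (fun z' => belU1 a d Re x y z' t) z =
      -(deriv (fun x' => belP a d Re x' y z t) x)) ∧
    (belU1 a d Re x y z t * deriv (fun x' => belU2 a d Re x' y z t) x +
       belU2 a d Re x y z t * deriv (fun y' => belU2 a d Re x y' z t) y +
       belU3 a d Re x y z t * deriv (fun z' => belU2 a d Re x y z' t) z =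
      -(deriv (fun y' => belP a d Re x y' z t) y)) ∧
    (belU1 a d Re x y z t * deriv (fun x' => belU3 a d Re x' y z t) x +
       belU2 a d Re x y z t * deriv (fun y' => belU3 a d Re x y' z t) y +
       belU3 a d Re x y z t * deriv (fun z' => belU3 a d Re x y z' t) z =
      -(deriv (fun z' => belP a d Re x y z' t) z)) := by
  refine ⟨beltrami_key a d Re x y z t, ?_, ?_⟩
  · rw [show (fun x' => belU2 a d Re x' y z t) = fun x' => belU1 a d Re y z x' t from
        funext fun w => u2_eq a d Re w y z t,
      show (fun y' => belU2 a d Re x y' z t) = fun y' => belU1 a d Re y' z x t from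
        funext fun w => u2_eq a d Re x w z t,
      show (fun z' => belU2 a d Re x y z' t) = fun z' => belU1 a d Re y z' x t from
        funext fun w => u2_eq a d Re x y w t,
      show (fun y' => belP a d Re x y' z t) = fun y' => belP a d Re y' z x t from
        funext fun w => p_cyc a d Re x w z t,
      show belU1 a d Re x y z t = belU3 a d Re y z x t from (u3_eq a d Re y z x t).symm,
      show belU2 a d Re x y z t = belU1 a d Re y z x t from u2_eq a d Re x y z t,
      show belU3 a d Re x y z t = belU2 a d Re y z x t from
        (u3_eq a d Re x y z t).trans (u2_eq a d Re y z x t).symm]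
    linear_combination beltrami_key a d Re y z x t
  · rw [show (fun x' => belU3 a d Re x' y z t) = fun x' => belU1 a d Re z x' y t from
        funext fun w => u3_eq a d Re w y z t,
      show (fun y' => belU3 a d Re x y' z t) = fun y' => belU1 a d Re z x y' t from
        funext fun w => u3_eq a d Re x w z t,
      show (fun z' => belU3 a d Re x y z' t) = fun z' => belU1 a d Re z' x y t from
        funext fun w => u3_eq a d Re x y w t,
      show (fun z' => belP a d Re x y z' t) = fun z' => belP a d Re z' x y t from
        funext fun w => (p_cyc a d Re x y w t).trans (p_cyc a d Re y w x t),
      show belU1 a d Re x y z t = belU2 a d Re z x y t from (u2_eq a d Re z x y t).symm,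
      show belU2 a d Re x y z t = belU3 a d Re z x y t from
        (u2_eq a d Re x y z t).trans (u3_eq a d Re z x y t).symm,
      show belU3 a d Re x y z t = belU1 a d Re z x y t from u3_eq a d Re x y z t]
    linear_combination beltrami_key a d Re z x y t
end

section
/- Let Ω ⊆ ℝ^D be open, T > 0, ν > 0, and let u : Ω × (0,T) → ℝ^D, p : Ω × (0,T) → ℝ, f : Ω × (0,T) → ℝ^D be infinitely differentiable and satisfy the momentum equation ∂u/∂t + (u·∇)u = f − ∇p + νΔu together with the pressure Poisson equation Δp = ∇·(f − (u·∇)u + νΔu) on Ω × (0,T) (without assuming ∇·u = 0). Then the velocity divergence is stationary: ∂(∇·u)/∂t = 0 on Ω × (0,T). -/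
/-- Partial derivative of `f : ℝⁿ → ℝ` in the `i`-th coordinate direction. -/
noncomputable def pd {n : ℕ} (i : Fin n) (f : (Fin n → ℝ) → ℝ) (x : Fin n → ℝ) : ℝ :=
  deriv (fun s : ℝ => f (Function.update x i s)) (x i)

/-- Laplacian of a scalar field `f : ℝⁿ → ℝ`. -/
noncomputable def lap {n : ℕ} (f : (Fin n → ℝ) → ℝ) (x : Fin n → ℝ) : ℝ :=
  ∑ i : Fin n, pd i (fun y => pd i f y) x

open Filter Topology

section aux
variable {n : ℕ}

lemma hasDerivAt_pd {g : (Fin n → ℝ) → ℝ} {x : Fin n → ℝ} {g' : (Fin n → ℝ) →L[ℝ] ℝ}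
    (i : Fin n) (hg : HasFDerivAt g g' x) :
    HasDerivAt (fun s => g (Function.update x i s)) (g' (Pi.single i 1)) (x i) := by
  have h1 : HasDerivAt (fun s => Function.update x i s) (Pi.single i 1) (x i) :=
    hasDerivAt_update x i (x i)
  have h2 : HasFDerivAt g g' (Function.update x i (x i)) := by
    rwa [Function.update_eq_self]
  exact h2.comp_hasDerivAt _ h1

lemma pd_eq_fderiv {g : (Fin n → ℝ) → ℝ} {x : Fin n → ℝ} (i : Fin n)
    (hg : DifferentiableAt ℝ g x) :
    pd i g x = fderiv ℝ g x (Pi.single i 1) :=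
  (hasDerivAt_pd i hg.hasFDerivAt).deriv

lemma pd_congr {g h : (Fin n → ℝ) → ℝ} {x : Fin n → ℝ} (i : Fin n)
    (hgh : g =ᶠ[𝓝 x] h) : pd i g x = pd i h x := by
  unfold pd
  apply Filter.EventuallyEq.deriv_eq
  have hc : Filter.Tendsto (fun s => Function.update x i s) (𝓝 (x i)) (𝓝 x) := by
    have := (hasDerivAt_update x i (x i)).continuousAt.tendsto
    rwa [Function.update_eq_self] at this
  exact hc.eventually hgh

lemma contDiffAt_pd {g : (Fin n → ℝ) → ℝ} {x : Fin n → ℝ} (i : Fin n)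
    (hg : ContDiffAt ℝ (⊤ : ℕ∞) g x) : ContDiffAt ℝ (⊤ : ℕ∞) (pd i g) x := by
  have hev : ∀ᶠ y in 𝓝 x, ContDiffAt ℝ 1 g y :=
    (hg.of_le (m := 1) (by simp)).eventually (by simp)
  have heq : pd i g =ᶠ[𝓝 x] fun y => fderiv ℝ g y (Pi.single i 1) := by
    filter_upwards [hev] with y hy
    exact pd_eq_fderiv i (hy.differentiableAt one_ne_zero)
  have hfd : ContDiffAt ℝ (⊤ : ℕ∞) (fderiv ℝ g) x := hg.fderiv_right (by simp)
  have : ContDiffAt ℝ (⊤ : ℕ∞) (fun y => fderiv ℝ g y (Pi.single i 1)) x :=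
    (ContinuousLinearMap.apply ℝ ℝ (Pi.single i 1 : Fin n → ℝ)).contDiff.contDiffAt.comp x hfd
  exact this.congr_of_eventuallyEq heq

lemma pd_sub {g h : (Fin n → ℝ) → ℝ} {x : Fin n → ℝ} (i : Fin n)
    (hg : DifferentiableAt ℝ g x) (hh : DifferentiableAt ℝ h x) :
    pd i (fun y => g y - h y) x = pd i g x - pd i h x := by
  rw [pd_eq_fderiv i hg, pd_eq_fderiv i hh]
  exact ((hasDerivAt_pd i hg.hasFDerivAt).sub (hasDerivAt_pd i hh.hasFDerivAt)).deriv

/-- Clairaut-type swap of the time derivative and a spatial partial derivative,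
packaged as a `HasDerivAt`. -/
lemma hasDerivAt_swap {F : ((Fin n → ℝ) × ℝ) → ℝ} {x : Fin n → ℝ} {t : ℝ}
    (i : Fin n) (hF : ContDiffAt ℝ (⊤ : ℕ∞) F (x, t)) :
    HasDerivAt (fun s => pd i (fun y => F (y, s)) x)
      (pd i (fun y => deriv (fun s => F (y, s)) t) x) t := by
  have hE : True := trivial
  set v : (Fin n → ℝ) × ℝ := (Pi.single i 1, 0) with hv
  set w : (Fin n → ℝ) × ℝ := (0, 1) with hw
  have hev : ∀ᶠ z in 𝓝 ((x, t) : (Fin n → ℝ) × ℝ), ContDiffAt ℝ 1 F z :=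
    (hF.of_le (m := 1) (by simp)).eventually (by simp)
  have hevd : ∀ᶠ z in 𝓝 (x, t), HasFDerivAt F (fderiv ℝ F z) z := by
    filter_upwards [hev] with z hz
    exact (hz.differentiableAt one_ne_zero).hasFDerivAt
  have hfd : ContDiffAt ℝ (⊤ : ℕ∞) (fderiv ℝ F) (x, t) := hF.fderiv_right (by simp)
  have hdd : DifferentiableAt ℝ (fderiv ℝ F) (x, t) := hfd.differentiableAt (by simp)
  set F'' := fderiv ℝ (fderiv ℝ F) (x, t) with hF''
  have hsymm : ∀ a b : (Fin n → ℝ) × ℝ, F'' a b = F'' b a :=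
    second_derivative_symmetric_of_eventually hevd hdd.hasFDerivAt
  -- the spatial curve through (x, t)
  have hcurveX : ∀ s : ℝ, HasDerivAt (fun σ : ℝ => ((Function.update x i σ : Fin n → ℝ), s)) v (x i) :=
    fun s => (hasDerivAt_update x i (x i)).prodMk (hasDerivAt_const (x i) s)
  have hcurveT : HasDerivAt (fun s : ℝ => ((x : Fin n → ℝ), s)) w t :=
    (hasDerivAt_const t x).prodMk (hasDerivAt_id t)
  -- pd along first slot via full derivative
  have pdF : ∀ z : (Fin n → ℝ) × ℝ, HasFDerivAt F (fderiv ℝ F z) z →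
      pd i (fun y => F (y, z.2)) z.1 = fderiv ℝ F z v := by
    rintro ⟨y, s⟩ hz
    have hcurve : HasDerivAt (fun σ : ℝ => ((Function.update y i σ : Fin n → ℝ), s)) v (y i) :=
      (hasDerivAt_update y i (y i)).prodMk (hasDerivAt_const (y i) s)
    have h2 : HasFDerivAt F (fderiv ℝ F (y, s)) (Function.update y i (y i), s) := by
      rwa [Function.update_eq_self]
    exact (h2.comp_hasDerivAt (y i) hcurve).deriv
  -- time derivative via full derivative
  have dT : ∀ z : (Fin n → ℝ) × ℝ, HasFDerivAt F (fderiv ℝ F z) z →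
      deriv (fun s => F (z.1, s)) z.2 = fderiv ℝ F z w := by
    rintro ⟨y, s⟩ hz
    have hcurve : HasDerivAt (fun s' : ℝ => ((y : Fin n → ℝ), s')) w s :=
      (hasDerivAt_const s y).prodMk (hasDerivAt_id s)
    exact (hz.comp_hasDerivAt _ hcurve).deriv
  -- RHS value: pd i (fun y => deriv ...) x = F'' v w
  have hRHS : pd i (fun y => deriv (fun s => F (y, s)) t) x = F'' v w := by
    have hevx : ∀ᶠ y in 𝓝 x, HasFDerivAt F (fderiv ℝ F (y, t)) (y, t) := by
      have hcont : Filter.Tendsto (fun y : Fin n → ℝ => ((y : Fin n → ℝ), t)) (𝓝 x) (𝓝 (x, t)) :=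
        (Continuous.prodMk_left t).tendsto x
      exact hcont.eventually hevd
    have h1 : pd i (fun y => deriv (fun s => F (y, s)) t) x
        = pd i (fun y => fderiv ℝ F (y, t) w) x := by
      apply pd_congr
      filter_upwards [hevx] with y hy
      exact dT (y, t) hy
    rw [h1]
    -- compute pd of y ↦ fderiv F (y,t) w along the update line
    have hcurve := hcurveX t
    have hGat : HasFDerivAt (fderiv ℝ F) F'' ((Function.update x i (x i) : Fin n → ℝ), t) := by
      rw [Function.update_eq_self]; exact hdd.hasFDerivAt
    have happ : HasFDerivAt (fun Φ : (Fin n → ℝ) × ℝ →L[ℝ] ℝ => Φ w)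
        (ContinuousLinearMap.apply ℝ ℝ w) (fderiv ℝ F ((Function.update x i (x i) : Fin n → ℝ), t)) :=
      (ContinuousLinearMap.apply ℝ ℝ w).hasFDerivAt
    have := (happ.comp _ hGat).comp_hasDerivAt (x i) hcurve
    have h2 : pd i (fun y => fderiv ℝ F (y, t) w) x = F'' v w := this.deriv
    rw [h2]
  rw [hRHS, hsymm v w]
  -- LHS: HasDerivAt of s ↦ pd i (F (·, s)) x at t with derivative F'' w v
  have hevt : ∀ᶠ s in 𝓝 t, HasFDerivAt F (fderiv ℝ F (x, s)) (x, s) := by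
    have hcont : Filter.Tendsto (fun s : ℝ => ((x : Fin n → ℝ), s)) (𝓝 t) (𝓝 (x, t)) :=
      (Continuous.prodMk_right x).tendsto t
    exact hcont.eventually hevd
  have heq : (fun s => pd i (fun y => F (y, s)) x) =ᶠ[𝓝 t] fun s => fderiv ℝ F (x, s) v := by
    filter_upwards [hevt] with s hs
    exact pdF (x, s) hs
  have happ : HasFDerivAt (fun Φ : (Fin n → ℝ) × ℝ →L[ℝ] ℝ => Φ v)
      (ContinuousLinearMap.apply ℝ ℝ v) (fderiv ℝ F (x, t)) :=
    (ContinuousLinearMap.apply ℝ ℝ v).hasFDerivAt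
  have hmain : HasDerivAt (fun s => fderiv ℝ F (x, s) v) (F'' w v) t :=
    (happ.comp _ hdd.hasFDerivAt).comp_hasDerivAt _ hcurveT
  exact hmain.congr_of_eventuallyEq heq

end aux

/-- If `(u, p)` satisfies the momentum equation together with the pressure
Poisson equation `Δp = ∇·(f − (u·∇)u + νΔu)` on `Ω × (0,T)` (without assuming
`∇·u = 0`), then the velocity divergence is stationary: `∂(∇·u)/∂t = 0`. -/
theorem ppe_velocity_divergence_stationary
    (D : ℕ) (Ω : Set (Fin D → ℝ)) (hΩ : IsOpen Ω) (T ν : ℝ) (hT : 0 < T) (hν : 0 < ν)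
    (u : (Fin D → ℝ) → ℝ → Fin D → ℝ) (p : (Fin D → ℝ) → ℝ → ℝ)
    (f : (Fin D → ℝ) → ℝ → Fin D → ℝ)
    (hu : ContDiffOn ℝ (⊤ : ℕ∞) (fun pr : (Fin D → ℝ) × ℝ => u pr.1 pr.2) (Ω ×ˢ Set.Ioo 0 T))
    (hp : ContDiffOn ℝ (⊤ : ℕ∞) (fun pr : (Fin D → ℝ) × ℝ => p pr.1 pr.2) (Ω ×ˢ Set.Ioo 0 T))
    (hf : ContDiffOn ℝ (⊤ : ℕ∞) (fun pr : (Fin D → ℝ) × ℝ => f pr.1 pr.2) (Ω ×ˢ Set.Ioo 0 T))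
    (hmom : ∀ x ∈ Ω, ∀ t ∈ Set.Ioo (0 : ℝ) T, ∀ i : Fin D,
      deriv (fun s => u x s i) t + ∑ k : Fin D, u x t k * pd k (fun y => u y t i) x
        = f x t i - pd i (fun y => p y t) x + ν * lap (fun y => u y t i) x)
    (hppe : ∀ x ∈ Ω, ∀ t ∈ Set.Ioo (0 : ℝ) T,
      lap (fun y => p y t) x
        = ∑ i : Fin D,
            pd i (fun y => f y t i - ∑ k : Fin D, u y t k * pd k (fun z => u z t i) y
              + ν * lap (fun z => u z t i) y) x) :
    ∀ x ∈ Ω, ∀ t ∈ Set.Ioo (0 : ℝ) T,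
      deriv (fun s => ∑ i : Fin D, pd i (fun y => u y s i) x) t = 0 := by
  intro x hx t ht
  have hnh : Ω ×ˢ Set.Ioo (0 : ℝ) T ∈ 𝓝 (x, t) := (hΩ.prod isOpen_Ioo).mem_nhds ⟨hx, ht⟩
  have hUi : ∀ i : Fin D, ContDiffAt ℝ (⊤ : ℕ∞) (fun pr : (Fin D → ℝ) × ℝ => u pr.1 pr.2 i) (x, t) :=
    fun i => (ContinuousLinearMap.proj i : ((Fin D → ℝ)) →L[ℝ] ℝ).contDiff.contDiffAt.comp
      (x, t) (hu.contDiffAt hnh)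
  have hswap : ∀ i : Fin D, HasDerivAt (fun s => pd i (fun y => u y s i) x)
      (pd i (fun y => deriv (fun s => u y s i) t) x) t :=
    fun i => hasDerivAt_swap i (hUi i)
  have hsum := HasDerivAt.fun_sum (fun i (_ : i ∈ Finset.univ) => hswap i)
  rw [hsum.deriv]
  -- spatial smoothness at x
  have hxt : ContDiffAt ℝ (⊤ : ℕ∞) (fun y : Fin D → ℝ => (y, t)) x :=
    contDiffAt_id.prodMk contDiffAt_const
  have huy : ∀ i : Fin D, ContDiffAt ℝ (⊤ : ℕ∞) (fun y => u y t i) x :=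
    fun i => by have := (hUi i).comp x hxt; exact this
  have hfy : ∀ i : Fin D, ContDiffAt ℝ (⊤ : ℕ∞) (fun y => f y t i) x :=
    fun i => by have := ((ContinuousLinearMap.proj i : ((Fin D → ℝ)) →L[ℝ] ℝ).contDiff.contDiffAt.comp
      (x, t) (hf.contDiffAt hnh)).comp x hxt; exact this
  have hP : ContDiffAt ℝ (⊤ : ℕ∞) (fun y => p y t) x := by have := (hp.contDiffAt hnh).comp x hxt; exact this
  have hlapu : ∀ i : Fin D, ContDiffAt ℝ (⊤ : ℕ∞) (fun y => lap (fun z => u z t i) y) x := by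
    intro i
    have : ContDiffAt ℝ (⊤ : ℕ∞) (fun y => ∑ j : Fin D, pd j (fun w => pd j (fun z => u z t i) w) y) x :=
      ContDiffAt.sum fun j _ => contDiffAt_pd j (contDiffAt_pd j (huy i))
    exact this
  have hB : ∀ i : Fin D, ContDiffAt ℝ (⊤ : ℕ∞)
      (fun y => f y t i - ∑ k : Fin D, u y t k * pd k (fun z => u z t i) y
        + ν * lap (fun z => u z t i) y) x := by
    intro i
    have hconv : ContDiffAt ℝ (⊤ : ℕ∞) (fun y => ∑ k : Fin D, u y t k * pd k (fun z => u z t i) y) x :=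
      ContDiffAt.sum fun k _ => (huy k).mul (contDiffAt_pd k (huy i))
    exact ((hfy i).sub hconv).add (contDiffAt_const.mul (hlapu i))
  -- rewrite each swapped term via the momentum equation
  have hterm : ∀ i : Fin D, pd i (fun y => deriv (fun s => u y s i) t) x
      = pd i (fun y => f y t i - ∑ k : Fin D, u y t k * pd k (fun z => u z t i) y
          + ν * lap (fun z => u z t i) y) x
        - pd i (fun y => pd i (fun z => p z t) y) x := by
    intro i
    have h1 : (fun y => deriv (fun s => u y s i) t) =ᶠ[𝓝 x]
        fun y => (f y t i - ∑ k : Fin D, u y t k * pd k (fun z => u z t i) y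
          + ν * lap (fun z => u z t i) y) - pd i (fun z => p z t) y := by
      filter_upwards [hΩ.mem_nhds hx] with y hy
      have := hmom y hy t ht i
      linarith
    rw [pd_congr i h1]
    exact pd_sub i ((hB i).differentiableAt (by simp))
      ((contDiffAt_pd i hP).differentiableAt (by simp))
  rw [Finset.sum_congr rfl fun i _ => hterm i, Finset.sum_sub_distrib]
  have hppe' := hppe x hx t ht
  have hlapP : lap (fun y => p y t) x = ∑ i : Fin D, pd i (fun y => pd i (fun z => p z t) y) x :=
    rfl
  rw [hlapP] at hppe'
  rw [← hppe']
  ring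
end
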